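/- arXiv:1408.3960 — 2 statements merged into one kernel-verified Lean document; each statement's English description precedes it below -/
import Mathlib

section
/- Let f : X → X be a continuous map of a compact metric space X. Define Ĉ⁰_f(X) = {φ ∈ C⁰(X) : I(φ,f) ≠ ∅}, the set of truly-observable continuous functions. If Ĉ⁰_f(X) is nonempty, then Ĉ⁰_f(X) is an open and dense subset of C⁰(X) with the supremum norm. -/
open MeasureTheory Filter Topology
open scoped ENNReal

/-- The `n`-th Birkhoff average of the observable `φ` at the point `x`:
`(1/n) ∑_{i=0}^{n-1} φ(f^i x)`. -/
noncomputable def birkhoffAvg {X : Type*} (f : X → X) (φ : X → ℝ) (n : ℕ) (x : X) : ℝ :=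
  (n : ℝ)⁻¹ * ∑ i ∈ Finset.range n, φ (f^[i] x)

/-- The `φ`-irregular set `I(φ,f)`: points whose Birkhoff averages do not converge. -/
def irregularSet {X : Type*} (f : X → X) (φ : X → ℝ) : Set X :=
  {x | ¬ ∃ L : ℝ, Filter.Tendsto (fun n => birkhoffAvg f φ n x) Filter.atTop (nhds L)}

/-- `M_x(f)`: the set of weak* limit points of the empirical measures
`E_n(x) = (1/n) ∑ δ_{f^i x}`, characterized by convergence of the integrals
(= Birkhoff averages) of every continuous function along a subsequence. -/
def limitMeasures {X : Type*} [TopologicalSpace X] [MeasurableSpace X]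
    (f : X → X) (x : X) : Set (MeasureTheory.Measure X) :=
  {μ | MeasureTheory.IsProbabilityMeasure μ ∧ ∃ ns : ℕ → ℕ, StrictMono ns ∧
    ∀ ψ : C(X, ℝ), Filter.Tendsto (fun j => birkhoffAvg f (⇑ψ) (ns j) x) Filter.atTop
      (nhds (∫ y, ψ y ∂μ))}

/-- The set `M_f(X)` of `f`-invariant Borel probability measures. -/
def invariantProb {X : Type*} [MeasurableSpace X] (f : X → X) :
    Set (MeasureTheory.Measure X) :=
  {μ | MeasureTheory.IsProbabilityMeasure μ ∧ μ.map f = μ}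

/-!
Birkhoff averages at a fixed point `x` are 1-Lipschitz in the observable for the
sup norm, and a uniform limit of Cauchy sequences is Cauchy, so the observables whose averages
converge at `x` form a closed set; its complement, a union over `x`, is open.
Birkhoff averages are linear in the observable: if `x ∈ I(φ₀, f)` and the averages of `ψ`
converge at `x`, then those of `ψ + t φ₀` diverge at `x` for every `t ≠ 0`, and `ψ + t φ₀ → ψ`.
-/

lemma isClosed_setOf_cauchySeq_of_lipschitzWith {E α : Type*} [PseudoMetricSpace E]
    [PseudoMetricSpace α] {F : ℕ → E → α} (hF : ∀ n, LipschitzWith 1 (F n)) :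
    IsClosed {e | CauchySeq (F · e)} := by
  refine isClosed_of_closure_subset fun e he => Metric.cauchySeq_iff.2 fun ε hε => ?_
  obtain ⟨e', he', hee'⟩ := Metric.mem_closure_iff.1 he (ε / 3) (by positivity)
  obtain ⟨N, hN⟩ := Metric.cauchySeq_iff.1 he' (ε / 3) (by positivity)
  have hclose : ∀ n, dist (F n e) (F n e') < ε / 3 := fun n =>
    ((hF n).dist_le_mul e e').trans_lt (by simpa using hee')
  refine ⟨N, fun m hm n hn => ?_⟩
  calc dist (F m e) (F n e)
      ≤ dist (F m e) (F m e') + dist (F m e') (F n e') + dist (F n e') (F n e) :=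
        dist_triangle4 _ _ _ _
    _ < ε / 3 + ε / 3 + ε / 3 := by
        gcongr
        · exact hclose m
        · exact hN m hm n hn
        · rw [dist_comm]; exact hclose n
    _ = ε := by ring

lemma mem_irregularSet_iff_not_cauchySeq {X : Type*} (f : X → X) (φ : X → ℝ) (x : X) :
    x ∈ irregularSet f φ ↔ ¬ CauchySeq (birkhoffAvg f φ · x) :=
  not_congr cauchy_map_iff_exists_tendsto.symm

lemma abs_birkhoffAvg_sub_le {X : Type*} (f : X → X) {φ ψ : X → ℝ} {C : ℝ}
    (h : ∀ y, |φ y - ψ y| ≤ C) (n : ℕ) (x : X) :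
    |birkhoffAvg f φ n x - birkhoffAvg f ψ n x| ≤ C := by
  rcases Nat.eq_zero_or_pos n with rfl | hn
  · simpa [birkhoffAvg] using (abs_nonneg _).trans (h x)
  have hsum : |∑ i ∈ Finset.range n, (φ (f^[i] x) - ψ (f^[i] x))| ≤ n * C :=
    calc |∑ i ∈ Finset.range n, (φ (f^[i] x) - ψ (f^[i] x))|
        ≤ ∑ i ∈ Finset.range n, |φ (f^[i] x) - ψ (f^[i] x)| := Finset.abs_sum_le_sum_abs _ _
      _ ≤ ∑ _i ∈ Finset.range n, C := Finset.sum_le_sum fun i _ => h _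
      _ = n * C := by simp
  have hn' : (0 : ℝ) < n := by exact_mod_cast hn
  rw [birkhoffAvg, birkhoffAvg, ← mul_sub, ← Finset.sum_sub_distrib, abs_mul,
    abs_of_pos (inv_pos.2 hn'), inv_mul_le_iff₀ hn']
  exact hsum

lemma lipschitzWith_birkhoffAvg {X : Type*} [TopologicalSpace X] [CompactSpace X]
    (f : X → X) (n : ℕ) (x : X) :
    LipschitzWith 1 (fun φ : C(X, ℝ) => birkhoffAvg f φ n x) :=
  LipschitzWith.of_dist_le_mul fun φ ψ => by
    simpa [Real.dist_eq, dist_eq_norm] using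
      abs_birkhoffAvg_sub_le f (fun y => (φ - ψ).norm_coe_le_norm y) n x

lemma isOpen_setOf_mem_irregularSet {X : Type*} [TopologicalSpace X] [CompactSpace X]
    (f : X → X) (x : X) : IsOpen {φ : C(X, ℝ) | x ∈ irregularSet f φ} := by
  simp only [mem_irregularSet_iff_not_cauchySeq]
  exact (isClosed_setOf_cauchySeq_of_lipschitzWith
    fun n => lipschitzWith_birkhoffAvg f n x).isOpen_compl

lemma birkhoffAvg_add_smul {X : Type*} (f : X → X) (ψ φ : X → ℝ) (t : ℝ) (n : ℕ) (x : X) :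
    birkhoffAvg f (ψ + t • φ) n x = birkhoffAvg f ψ n x + t * birkhoffAvg f φ n x := by
  simp only [birkhoffAvg, Pi.add_apply, Pi.smul_apply, smul_eq_mul, Finset.sum_add_distrib,
    ← Finset.mul_sum]
  ring

lemma mem_irregularSet_add_smul {X : Type*} {f : X → X} {φ ψ : X → ℝ} {x : X}
    (hφ : x ∈ irregularSet f φ) (hψ : x ∉ irregularSet f ψ) {t : ℝ} (ht : t ≠ 0) :
    x ∈ irregularSet f (ψ + t • φ) := by
  rintro ⟨L, hL⟩
  obtain ⟨A, hA⟩ := not_not.1 hψ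
  refine hφ ⟨(L - A) / t, ?_⟩
  have hφ_eq : (birkhoffAvg f φ · x) =
      fun n => (birkhoffAvg f (ψ + t • φ) n x - birkhoffAvg f ψ n x) / t := by
    funext n
    rw [birkhoffAvg_add_smul]
    field_simp
    ring
  rw [hφ_eq]
  exact (hL.sub hA).div_const t

lemma mem_closure_setOf_irregularSet_nonempty {X : Type*} [TopologicalSpace X] [CompactSpace X]
    {f : X → X} {φ : C(X, ℝ)} (hφ : (irregularSet f φ).Nonempty) (ψ : C(X, ℝ)) :
    ψ ∈ closure {χ : C(X, ℝ) | (irregularSet f χ).Nonempty} := by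
  obtain ⟨x, hx⟩ := hφ
  by_cases hψ : x ∈ irregularSet f ψ
  · exact subset_closure ⟨x, hψ⟩
  have hlim : Tendsto (fun t : ℝ => ψ + t • φ) (𝓝[≠] 0) (𝓝 ψ) := by
    have hcont : Continuous fun t : ℝ => ψ + t • φ := by fun_prop
    simpa using (hcont.tendsto 0).mono_left nhdsWithin_le_nhds
  refine mem_closure_of_tendsto hlim ?_
  filter_upwards [self_mem_nhdsWithin] with t ht
  exact ⟨x, by simpa using mem_irregularSet_add_smul hx hψ ht⟩

theorem stmt4_general {X : Type*} [MetricSpace X] [CompactSpace X]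
    (f : X → X)
    (h : {φ : C(X, ℝ) | (irregularSet f ⇑φ).Nonempty}.Nonempty) :
    IsOpen {φ : C(X, ℝ) | (irregularSet f ⇑φ).Nonempty} ∧
      Dense {φ : C(X, ℝ) | (irregularSet f ⇑φ).Nonempty} := by
  obtain ⟨φ, hφ⟩ := h
  refine ⟨?_, mem_closure_setOf_irregularSet_nonempty hφ⟩
  simp only [Set.Nonempty, Set.ofPred_exists]
  exact isOpen_iUnion fun x => isOpen_setOf_mem_irregularSet f x

/-- if the set of truly-observable continuous functions
`Ĉ⁰_f(X) = {φ : I(φ,f) ≠ ∅}` is nonempty, then it is open and dense in `C(X,ℝ)`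
(with the sup-norm topology). -/
theorem stmt4 {X : Type*} [MetricSpace X] [CompactSpace X]
    (f : X → X) (hf : Continuous f)
    (h : {φ : C(X, ℝ) | (irregularSet f ⇑φ).Nonempty}.Nonempty) :
    IsOpen {φ : C(X, ℝ) | (irregularSet f ⇑φ).Nonempty} ∧
      Dense {φ : C(X, ℝ) | (irregularSet f ⇑φ).Nonempty} :=
  stmt4_general f h
end

section
/- Let f : X → X be a continuous map of a compact metric space X. Suppose x ∈ X is a point such that for every continuous φ with I(φ,f) ≠ ∅ one has x ∈ I(φ,f) (x is completely-irregular). Assume further that whenever two invariant measures give different integrals to some continuous φ, then I(φ,f) ≠ ∅ (e.g. f has specification). Then supp(ν) ⊆ ω_f(x) for every f-invariant Borel probability measure ν; i.e. ν(ω_f(x)) = 1 for all invariant ν. -/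
open MeasureTheory Filter Topology
open scoped ENNReal

/-- The ω-limit set of `x` under `f`. -/
def omegaSet {X : Type*} [TopologicalSpace X] (f : X → X) (x : X) : Set X :=
  ⋂ N : ℕ, closure {y | ∃ n, N ≤ n ∧ f^[n] x = y}

/-- The topological support of a measure. -/
def measSupport {X : Type*} [TopologicalSpace X] [MeasurableSpace X]
    (μ : MeasureTheory.Measure X) : Set X :=
  {y | ∀ U : Set X, IsOpen U → y ∈ U → 0 < μ U}

/-!
Suppose `y ∈ supp ν` but `y ∉ ω_f(x)`. Urysohn gives a continuous `u ≥ 0` with `u y = 1` that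
vanishes on the closure of a tail `{f^n x | n ≥ N}` of the orbit, so the Birkhoff averages of `u`
at `x` tend to `0`: `x` is `u`-regular, hence `I(u,f) = ∅` by complete irregularity, hence all
invariant measures give `u` the same integral. A Krylov–Bogolyubov limit of the empirical measures
of `x` is invariant and gives `u` the integral `0`, whereas `ν` gives it a positive one.
Since `X` is second countable, `supp ν` is `ν`-conull, so `ν(ω_f(x)) = 1`.
-/

open Finset BoundedContinuousFunction

section Birkhoff

variable {α : Type*}

lemma birkhoffAvg_eq_birkhoffAverage (f : α → α) (φ : α → ℝ) :
    birkhoffAvg f φ = birkhoffAverage ℝ f φ :=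
  rfl

lemma birkhoffAverage_comp_apply {R M : Type*} [DivisionSemiring R] [AddCommMonoid M] [Module R M]
    (f : α → α) (g : α → M) (n : ℕ) (x : α) :
    birkhoffAverage R f (g ∘ f) n x = birkhoffAverage R f g n (f x) := by
  simp only [birkhoffAverage, birkhoffSum, Function.comp_apply, ← Function.iterate_succ_apply' f,
    Function.iterate_succ_apply]

theorem tendsto_birkhoffAverage_zero_of_iterate_eq_zero {E : Type*} [NormedAddCommGroup E]
    [NormedSpace ℝ E] {f : α → α} {g : α → E} {x : α} {N : ℕ}
    (h : ∀ n, g (f^[n + N] x) = 0) :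
    Tendsto (birkhoffAverage ℝ f g · x) atTop (𝓝 0) := by
  have htail : ∀ n, birkhoffSum f g n (f^[N] x) = 0 := fun n =>
    Finset.sum_eq_zero fun k _ => by rw [← Function.iterate_add_apply, h]
  have heq : ∀ n ≥ N, birkhoffAverage ℝ f g n x = (n : ℝ)⁻¹ • birkhoffSum f g N x := by
    intro n hn
    obtain ⟨k, rfl⟩ := Nat.exists_eq_add_of_le hn
    rw [birkhoffAverage, birkhoffSum_add, htail, add_zero]
  simpa using (tendsto_inv_atTop_nhds_zero_nat.smul_const (birkhoffSum f g N x)).congr'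
    (eventually_atTop.2 ⟨N, fun n hn => (heq n hn).symm⟩)

end Birkhoff

section Empirical

variable {X : Type*} [MeasurableSpace X]

noncomputable def empiricalMeasure (f : X → X) (n : ℕ) (x : X) : Measure X :=
  (n : ℝ≥0∞)⁻¹ • ∑ k ∈ range n, Measure.dirac (f^[k] x)

lemma isProbabilityMeasure_empiricalMeasure (f : X → X) {n : ℕ} (hn : n ≠ 0) (x : X) :
    IsProbabilityMeasure (empiricalMeasure f n x) := by
  constructor
  simp [empiricalMeasure,
    ENNReal.inv_mul_cancel (Nat.cast_ne_zero.2 hn) (ENNReal.natCast_ne_top n)]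

lemma integral_empiricalMeasure [MeasurableSingletonClass X] {E : Type*} [NormedAddCommGroup E]
    [NormedSpace ℝ E] [CompleteSpace E] (f : X → X) (n : ℕ) (x : X) (g : X → E) :
    ∫ y, g y ∂(empiricalMeasure f n x) = birkhoffAverage ℝ f g n x := by
  rw [empiricalMeasure, integral_smul_measure, integral_finsetSum_measure]
  · simp [birkhoffAverage, birkhoffSum]
  · exact fun k _ => integrable_dirac enorm_lt_top

end Empirical

lemma integral_eq_of_mem_limitMeasures {X : Type*} [TopologicalSpace X] [MeasurableSpace X]
    {f : X → X} {x : X} {μ : Measure X} (hμ : μ ∈ limitMeasures f x)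
    {ψ : C(X, ℝ)} {L : ℝ} (hL : Tendsto (birkhoffAvg f ψ · x) atTop (𝓝 L)) :
    ∫ y, ψ y ∂μ = L := by
  obtain ⟨-, ns, hns, hlim⟩ := hμ
  exact tendsto_nhds_unique (hlim ψ) (hL.comp hns.tendsto_atTop)

section KrylovBogolyubov

variable {X : Type*} [MetricSpace X] [CompactSpace X] [MeasurableSpace X] [BorelSpace X]

/-- The weak-* topology on probability measures on a compact metric space is compact and
metrizable, so the empirical measures have a convergent subsequence. -/
theorem limitMeasures_nonempty (f : X → X) (x : X) : (limitMeasures f x).Nonempty := by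
  let P : ℕ → ProbabilityMeasure X := fun n =>
    ⟨empiricalMeasure f (n + 1) x, isProbabilityMeasure_empiricalMeasure f n.succ_ne_zero x⟩
  obtain ⟨μ, -, ns, hns, hlim⟩ := isCompact_univ.tendsto_subseq (x := P) fun _ => Set.mem_univ _
  refine ⟨μ, μ.prop, (· + 1) ∘ ns, (strictMono_id.add_const 1).comp hns, fun ψ => ?_⟩
  exact (ProbabilityMeasure.tendsto_iff_forall_integral_tendsto.1 hlim (mkOfCompact ψ)).congr
    fun j => integral_empiricalMeasure f _ x ψ

/-- The Birkhoff averages of `ψ ∘ f` and of `ψ` at `x` differ by `(ψ (f^[n] x) - ψ x) / n → 0`,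
so a limit measure gives them the same integral. -/
theorem limitMeasures_subset_invariantProb {f : X → X} (hf : Continuous f) (x : X) :
    limitMeasures f x ⊆ invariantProb f := by
  rintro μ ⟨hμ, ns, hns, hlim⟩
  refine ⟨hμ, ext_of_forall_integral_eq_of_IsFiniteMeasure fun g => ?_⟩
  let ψ : C(X, ℝ) := g
  have hshift : Tendsto (fun j => birkhoffAvg f (ψ.comp ⟨f, hf⟩) (ns j) x
      - birkhoffAvg f ψ (ns j) x) atTop (𝓝 0) := by
    refine ((tendsto_birkhoffAverage_apply_sub_birkhoffAverage' ℝ (g := ψ)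
      (isCompact_range ψ.continuous).isBounded f x).comp hns.tendsto_atTop).congr fun j => ?_
    simp [birkhoffAvg_eq_birkhoffAverage, ← birkhoffAverage_comp_apply]
  rw [integral_map hf.aemeasurable g.continuous.aestronglyMeasurable]
  exact tendsto_nhds_unique (hlim (ψ.comp ⟨f, hf⟩)) (by simpa [ψ] using (hlim ψ).add hshift)

theorem integral_eq_of_tendsto_birkhoffAvg {f : X → X} (hf : Continuous f) {x : X}
    {ψ : C(X, ℝ)} (hCI : (irregularSet f ⇑ψ).Nonempty → x ∈ irregularSet f ⇑ψ)
    (hspec : (∃ μ₁ ∈ invariantProb f, ∃ μ₂ ∈ invariantProb f, ∫ y, ψ y ∂μ₁ ≠ ∫ y, ψ y ∂μ₂) →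
      (irregularSet f ⇑ψ).Nonempty)
    {L : ℝ} (hL : Tendsto (birkhoffAvg f ψ · x) atTop (𝓝 L)) :
    ∀ ν ∈ invariantProb f, ∫ y, ψ y ∂ν = L := by
  intro ν hν
  obtain ⟨μ, hμ⟩ := limitMeasures_nonempty f x
  by_contra hνL
  refine hCI (hspec ⟨ν, hν, μ, limitMeasures_subset_invariantProb hf x hμ, ?_⟩) ⟨L, hL⟩
  rwa [integral_eq_of_mem_limitMeasures hμ hL]

end KrylovBogolyubov

lemma measSupport_eq_support {X : Type*} [TopologicalSpace X] [MeasurableSpace X]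
    (ν : Measure X) : measSupport ν = ν.support := by
  ext y
  simp [measSupport, Measure.support_eq_forall_isOpen, imp.swap]

lemma integral_pos_of_mem_support {X : Type*} [TopologicalSpace X] [MeasurableSpace X]
    {ν : Measure X} {u : X → ℝ} (hu : Continuous u) (hu0 : 0 ≤ u)
    (hint : Integrable u ν) {y : X} (hy : y ∈ ν.support) (huy : 0 < u y) : 0 < ∫ z, u z ∂ν := by
  rw [integral_pos_iff_support_of_nonneg hu0 hint]
  exact ((Measure.mem_support_iff_forall y).1 hy (u ⁻¹' Set.Ioi 0)
    ((isOpen_Ioi.preimage hu).mem_nhds huy)).trans_le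
    (measure_mono fun z hz => (Set.mem_Ioi.1 hz).ne')

/-- if `x` is completely-irregular and the system has the property that any
continuous function separating two invariant measures has nonempty irregular set, then
`supp ν ⊆ ω_f(x)`, i.e. `ν(ω_f(x)) = 1`, for every invariant probability measure `ν`. -/
theorem stmt9 {X : Type*} [MetricSpace X] [CompactSpace X] [MeasurableSpace X] [BorelSpace X]
    (f : X → X) (hf : Continuous f) (x : X)
    (hCI : ∀ φ : C(X, ℝ), (irregularSet f ⇑φ).Nonempty → x ∈ irregularSet f ⇑φ)
    (hspec : ∀ φ : C(X, ℝ),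
      (∃ μ₁ ∈ invariantProb f, ∃ μ₂ ∈ invariantProb f, ∫ y, φ y ∂μ₁ ≠ ∫ y, φ y ∂μ₂) →
      (irregularSet f ⇑φ).Nonempty) :
    ∀ ν ∈ invariantProb f, measSupport ν ⊆ omegaSet f x ∧ ν (omegaSet f x) = 1 := by
  intro ν hν
  have : IsProbabilityMeasure ν := hν.1
  rw [measSupport_eq_support]
  have hsupp : ν.support ⊆ omegaSet f x := by
    intro y hy
    by_contra hyω
    obtain ⟨N, hyN⟩ : ∃ N, y ∉ closure {z | ∃ n, N ≤ n ∧ f^[n] x = z} := by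
      simpa [omegaSet] using hyω
    obtain ⟨u, hu0, hu1, hu01⟩ := exists_continuous_zero_one_of_isClosed isClosed_closure
      isClosed_singleton (Set.disjoint_singleton_right.2 hyN)
    have hreg : Tendsto (birkhoffAvg f u · x) atTop (𝓝 0) := by
      rw [birkhoffAvg_eq_birkhoffAverage]
      exact tendsto_birkhoffAverage_zero_of_iterate_eq_zero fun n =>
        hu0 (subset_closure ⟨n + N, N.le_add_left n, rfl⟩)
    have hνu : 0 < ∫ z, u z ∂ν := integral_pos_of_mem_support u.continuous (fun z => (hu01 z).1)
      (u.continuous.integrable_of_hasCompactSupport (.of_compactSpace u)) hy (by simp [hu1 rfl])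
    exact hνu.ne' (integral_eq_of_tendsto_birkhoffAvg hf (hCI u) (hspec u) hreg ν hν)
  refine ⟨hsupp, ?_⟩
  have hω : IsClosed (omegaSet f x) := isClosed_iInter fun _ => isClosed_closure
  rw [← prob_compl_eq_zero_iff hω.measurableSet]
  exact measure_mono_null (Set.compl_subset_compl.2 hsupp) ν.measure_compl_support
end
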